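/- The integral (1/(2π)) ∫₀^{2π} |e^{iθ} + 2|² / (4·|e^{3iθ} − e^{2iθ} − 4|²) dθ equals 91/1056. -/

import Mathlib

/-!
On the unit circle `conj z = z⁻¹`, so the integrand is the rational function
`(z + 2)(z⁻¹ + 2) / (4 p(z) p(z⁻¹))` with `p(z) = z³ - z² - 4`. Since `p` has no zeros in the
closed unit disc, partial fractions write it as `Re F(z)` for a rational `F` holomorphic on the
closed disc, and the mean value property gives `(1/2π) ∫ Re F(e^{iθ}) dθ = Re F(0) = 91/1056`.
-/

open Complex Metric ComplexConjugate Real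

/-- Twice the part of the partial fraction decomposition of `(z + 2)(z⁻¹ + 2) / (4 p(z) p(z⁻¹))`
whose poles are the zeros of `p(z) = z³ - z² - 4`, all outside the closed unit disc. -/
noncomputable def analyticPart (z : ℂ) : ℂ :=
  (-91 * z ^ 3 + 45 * z ^ 2 - 184 * z - 364) / (1056 * (z ^ 3 - z ^ 2 - 4))

lemma cubic_ne_zero_of_norm_le_one {z : ℂ} (hz : ‖z‖ ≤ 1) : z ^ 3 - z ^ 2 - 4 ≠ 0 := by
  intro h
  have : ‖z ^ 3 - z ^ 2‖ ≤ 2 := calc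
    ‖z ^ 3 - z ^ 2‖ ≤ ‖z ^ 3‖ + ‖z ^ 2‖ := norm_sub_le _ _
    _ ≤ 1 + 1 := by rw [norm_pow, norm_pow]; gcongr <;> exact pow_le_one₀ (norm_nonneg z) hz
    _ = 2 := by norm_num
  rw [show z ^ 3 - z ^ 2 = 4 by linear_combination h] at this
  norm_num at this

lemma diffContOnCl_analyticPart : DiffContOnCl ℂ analyticPart (ball 0 1) := by
  refine DifferentiableOn.diffContOnCl fun z hz ↦ ?_
  rw [closure_ball 0 one_ne_zero, mem_closedBall_zero_iff] at hz
  have := cubic_ne_zero_of_norm_le_one hz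
  unfold analyticPart
  fun_prop (disch := simpa)

lemma conj_analyticPart (z : ℂ) : conj (analyticPart z) = analyticPart (conj z) := by
  simp only [analyticPart, map_div₀, map_mul, map_sub, map_add, map_neg, map_pow, map_ofNat]

lemma analyticPart_add_analyticPart_inv {z : ℂ} (hz : z ≠ 0) (hp : z ^ 3 - z ^ 2 - 4 ≠ 0)
    (hp_inv : z⁻¹ ^ 3 - z⁻¹ ^ 2 - 4 ≠ 0) :
    (analyticPart z + analyticPart z⁻¹) / 2 =
      (z + 2) * (z⁻¹ + 2) / (4 * (z ^ 3 - z ^ 2 - 4) * (z⁻¹ ^ 3 - z⁻¹ ^ 2 - 4)) := by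
  -- the denominators in the shape `field_simp` puts them in
  have hp' : z ^ 2 * (z - 1) - 4 ≠ 0 := by ring_nf at hp ⊢; exact hp
  have hq : 1 - z - z ^ 3 * 4 ≠ 0 := by
    rw [show 1 - z - z ^ 3 * 4 = z ^ 3 * (z⁻¹ ^ 3 - z⁻¹ ^ 2 - 4) by field_simp]
    exact mul_ne_zero (pow_ne_zero 3 hz) hp_inv
  unfold analyticPart
  field_simp
  ring

lemma integrand_eq_re_analyticPart {z : ℂ} (hz : ‖z‖ = 1) :
    ‖z + 2‖ ^ 2 / (4 * ‖z ^ 3 - z ^ 2 - 4‖ ^ 2) = (analyticPart z).re := by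
  have hz0 : z ≠ 0 := norm_ne_zero_iff.mp (by simp [hz])
  have hconj : conj z = z⁻¹ := (inv_eq_conj hz).symm
  have hp := cubic_ne_zero_of_norm_le_one hz.le
  have hp_inv := cubic_ne_zero_of_norm_le_one (z := z⁻¹) (by simp [hz])
  apply ofReal_injective
  push_cast
  rw [re_eq_add_conj, conj_analyticPart, hconj, analyticPart_add_analyticPart_inv hz0 hp hp_inv,
    ← mul_conj', ← mul_conj']
  simp only [map_add, map_sub, map_pow, map_ofNat, hconj]
  ring

theorem first_passage_prob_44 :
    (1 / (2 * Real.pi)) * ∫ θ in (0 : ℝ)..(2 * Real.pi),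
      (‖Complex.exp (θ * Complex.I) + 2‖) ^ 2 /
        (4 * (‖Complex.exp (3 * θ * Complex.I) -
          Complex.exp (2 * θ * Complex.I) - 4‖) ^ 2) = 91 / 1056 := by
  have hpow (θ : ℝ) (n : ℕ) : exp (n * θ * I) = exp (θ * I) ^ n := by
    rw [mul_assoc, Complex.exp_nat_mul]
  have hint : CircleIntegrable analyticPart 0 1 :=
    (diffContOnCl_analyticPart.continuousOn.mono <| by
      simpa [closure_ball] using sphere_subset_closedBall).circleIntegrable zero_le_one
  calc _ = circleAverage (fun z ↦ ‖z + 2‖ ^ 2 / (4 * ‖z ^ 3 - z ^ 2 - 4‖ ^ 2)) 0 1 := by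
        rw [circleAverage_def, smul_eq_mul, one_div]
        congr! 2 with θ
        simp only [circleMap_zero, ofReal_one, one_mul, ← hpow]
        norm_num
    _ = circleAverage (reCLM ∘ analyticPart) 0 1 :=
        circleAverage_congr_sphere fun z hz ↦ integrand_eq_re_analyticPart (by simpa using hz)
    _ = (analyticPart 0).re := by
        rw [reCLM.circleAverage_comp_comm hint,
          DiffContOnCl.circleAverage (by simpa using diffContOnCl_analyticPart), reCLM_apply]
    _ = 91 / 1056 := by norm_num [analyticPart]
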